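/- Let ψ(x) = ∑_{j=1}^d x_j log x_j and let B_ψ(y, x) = ∑_{i=1}^d y_i log(y_i/x_i) denote the associated Bregman divergence (KL divergence) on the simplex. Let x ∈ Δ_d have strictly positive entries, let g ∈ ℝ_{≥0}^d be a nonnegative vector, let η > 0, and define y ∈ Δ_d by y_i = x_i exp(−η g_i) / ∑_{j=1}^d x_j exp(−η g_j). Then −(1/η) B_ψ(y, x) + gᵀ(x − y) ≤ (η/2) ∑_{i=1}^d g_i² x_i. -/

import Mathlib

/-!
Writing `Z = ∑ⱼ xⱼ exp (-η gⱼ)`, one has `log (yᵢ / xᵢ) = -η gᵢ - log Z`, so the divergence term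
collapses and the left-hand side equals `⟨g, x⟩ + (log Z) / η`. Since `log Z ≤ Z - 1` and
`exp (-t) ≤ 1 - t + t² / 2` for `t ≥ 0`, averaging the latter against `x` gives
`log Z ≤ -η ⟨g, x⟩ + (η² / 2) ∑ᵢ gᵢ² xᵢ`.
-/

open Finset Real

lemma Real.exp_neg_le_one_sub_add_sq_div_two {t : ℝ} (ht : 0 ≤ t) :
    exp (-t) ≤ 1 - t + t ^ 2 / 2 := by
  let h : ℝ → ℝ := fun u ↦ 1 - u + u ^ 2 / 2 - exp (-u)
  have hderiv : ∀ u, HasDerivAt h (-1 + u + exp (-u)) u := fun u ↦ by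
    have := (((hasDerivAt_id u).const_sub 1).add ((hasDerivAt_pow 2 u).div_const 2)).sub
      (hasDerivAt_neg u).exp
    exact this.congr_deriv (by simp)
  have hmono : Monotone h := monotone_of_deriv_nonneg (fun u ↦ (hderiv u).differentiableAt)
    fun u ↦ by rw [(hderiv u).deriv]; linarith [add_one_le_exp (-u)]
  simpa [h] using hmono ht

section ExponentialWeights

variable {ι : Type*} [Fintype ι] {x g y : ι → ℝ} {η : ℝ}

lemma sum_mul_exp_neg_pos (hx : ∀ i, 0 < x i) (hx1 : ∑ i, x i = 1) :
    0 < ∑ i, x i * exp (-η * g i) :=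
  sum_pos (fun i _ ↦ mul_pos (hx i) (exp_pos _))
    (nonempty_of_sum_ne_zero (f := x) (by simp [hx1]))

lemma sum_mul_exp_neg_le (hx : ∀ i, 0 ≤ x i) (hx1 : ∑ i, x i = 1) (hg : ∀ i, 0 ≤ g i)
    (hη : 0 ≤ η) :
    ∑ i, x i * exp (-η * g i) ≤ 1 - η * ∑ i, g i * x i + η ^ 2 / 2 * ∑ i, g i ^ 2 * x i :=
  calc ∑ i, x i * exp (-η * g i) ≤ ∑ i, x i * (1 - η * g i + (η * g i) ^ 2 / 2) :=
        sum_le_sum fun i _ ↦ mul_le_mul_of_nonneg_left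
          (by simpa using exp_neg_le_one_sub_add_sq_div_two (mul_nonneg hη (hg i))) (hx i)
    _ = ∑ i, x i - η * ∑ i, g i * x i + η ^ 2 / 2 * ∑ i, g i ^ 2 * x i := by
        simp only [mul_sum, ← sum_sub_distrib, ← sum_add_distrib]
        exact sum_congr rfl fun i _ ↦ by ring
    _ = 1 - η * ∑ i, g i * x i + η ^ 2 / 2 * ∑ i, g i ^ 2 * x i := by rw [hx1]

lemma sum_mul_log_div_of_eq_exp_weights (hx : ∀ i, x i ≠ 0)
    (hZ : ∑ j, x j * exp (-η * g j) ≠ 0)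
    (hy : ∀ i, y i = x i * exp (-η * g i) / ∑ j, x j * exp (-η * g j)) :
    ∑ i, y i * log (y i / x i) = -η * ∑ i, g i * y i - log (∑ j, x j * exp (-η * g j)) := by
  set Z := ∑ j, x j * exp (-η * g j)
  have hy1 : ∑ i, y i = 1 := by simp only [hy, ← sum_div]; exact div_self hZ
  have hlog : ∀ i, log (y i / x i) = -η * g i - log Z := fun i ↦ by
    rw [hy i, mul_div_assoc, mul_div_cancel_left₀ _ (hx i), log_div (exp_ne_zero _) hZ,
      log_exp]
  calc ∑ i, y i * log (y i / x i) = -η * ∑ i, g i * y i - (∑ i, y i) * log Z := by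
        simp only [hlog, mul_sum, sum_mul, ← sum_sub_distrib]
        exact sum_congr rfl fun i _ ↦ by ring
    _ = -η * ∑ i, g i * y i - log Z := by rw [hy1, one_mul]

end ExponentialWeights

/-- Bound on the Bregman (KL) divergence term for the exponential-weights update. -/
theorem stmt9 (d : ℕ) (x : Fin d → ℝ) (hx0 : ∀ i, 0 < x i) (hx1 : ∑ i, x i = 1)
    (g : Fin d → ℝ) (hg : ∀ i, 0 ≤ g i) (η : ℝ) (hη : 0 < η)
    (y : Fin d → ℝ)
    (hy : ∀ i, y i = x i * Real.exp (-η * g i) / ∑ j, x j * Real.exp (-η * g j)) :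
    -(1 / η) * (∑ i, y i * Real.log (y i / x i)) + ∑ i, g i * (x i - y i) ≤
      (η / 2) * ∑ i, g i ^ 2 * x i := by
  have hZ := sum_mul_exp_neg_pos (η := η) (g := g) hx0 hx1
  have hlogZ : log (∑ j, x j * exp (-η * g j)) ≤
      η * (-∑ i, g i * x i + η / 2 * ∑ i, g i ^ 2 * x i) := by
    linarith [log_le_sub_one_of_pos hZ, sum_mul_exp_neg_le (fun i ↦ (hx0 i).le) hx1 hg hη.le]
  have hlogZ_div := (div_le_iff₀' hη).2 hlogZ
  rw [sum_mul_log_div_of_eq_exp_weights (fun i ↦ (hx0 i).ne') hZ.ne' hy]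
  simp only [mul_sub, sum_sub_distrib]
  have hdivergence_term : -(1 / η) * (-η * ∑ i, g i * y i - log (∑ j, x j * exp (-η * g j))) =
      ∑ i, g i * y i + log (∑ j, x j * exp (-η * g j)) / η := by
    field_simp
    ring
  linarith
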